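/- arXiv:2511.17243 — 7 statements merged into one kernel-verified Lean document; each statement's English description precedes it below -/
import Mathlib

section
/- If (A,C) is observable, then for every nonzero positive semidefinite initial condition P₀ and every t > 0, the solution P(t) to the matrix ODE dP/dt = AᵀP + PA + α·tr(P)·CᵀC (with α > 0) is positive definite. -/
/-!
Write `E t = exp (t • A)`. Differentiating `r ↦ ⟪E (t - r) u, P r (E (t - r) w)⟫` gives the
variation-of-constants formula
`⟪u, P t w⟫ = ⟪E t u, P 0 (E t w)⟫ + ∫₀ᵗ α tr (P s) ⟪C E (t - s) u, C E (t - s) w⟫ ds`.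
Summing over a basis, as long as `tr P ≥ 0` on `[0, τ]` we get
`tr (P τ) ≥ tr ((E τ)ᵀ P 0 E τ) > 0`, so a first-hitting-time argument gives `tr P > 0` on
`[0, ∞)`. Then both terms of the formula for `⟪v, P t v⟫` are nonnegative, and if it vanishes
the output `C E s v` vanishes for `s ∈ (0, t)`. Differentiating there gives `C Aᵏ E s v = 0` for
all `k`, so `E s v = 0` by observability, and `v = 0` since `E s` is invertible.
-/

open Matrix NormedSpace Set

theorem forall_pos_of_forall_nonneg_Icc_imp_pos {g : ℝ → ℝ} (hg : Continuous g) (h0 : 0 ≤ g 0)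
    (hstep : ∀ τ, 0 ≤ τ → (∀ s ∈ Icc 0 τ, 0 ≤ g s) → 0 < g τ) : ∀ τ, 0 ≤ τ → 0 < g τ := by
  intro τ hτ
  by_contra! hτneg
  obtain ⟨s₀, ⟨hs₀, hgs₀⟩, hmin⟩ : ∃ s₀, IsLeast (Icc 0 τ ∩ {s | g s ≤ 0}) s₀ :=
    (isCompact_Icc.inter_right (isClosed_le hg continuous_const)).exists_isLeast
      ⟨τ, ⟨hτ, le_rfl⟩, hτneg⟩
  have hIco : Ico 0 s₀ ⊆ {s | 0 ≤ g s} := fun s hs =>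
    show 0 ≤ g s from le_of_not_ge fun hgs =>
      hs.2.not_ge (hmin ⟨⟨hs.1, hs.2.le.trans hs₀.2⟩, hgs⟩)
  have hIcc : Icc 0 s₀ ⊆ {s | 0 ≤ g s} := by
    rcases eq_or_ne 0 s₀ with rfl | hne
    · simpa using h0
    · rw [← closure_Ico hne]
      exact closure_minimal hIco (isClosed_le continuous_const hg)
  exact (hstep s₀ hs₀.1 hIcc).not_ge hgs₀

theorem eqOn_zero_of_integral_eq_zero {f : ℝ → ℝ} {a b : ℝ} (hf : Continuous f) (hab : a ≤ b)
    (hnn : ∀ x ∈ Ioc a b, 0 ≤ f x) (hint : ∫ x in a..b, f x = 0) : EqOn f 0 (Ioo a b) := by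
  have hae := (intervalIntegral.integral_eq_zero_iff_of_le_of_nonneg_ae hab
    (MeasureTheory.ae_restrict_of_forall_mem measurableSet_Ioc hnn)
    (hf.intervalIntegrable a b)).1 hint
  exact MeasureTheory.Measure.eqOn_Ioo_of_ae_eq (μ := MeasureTheory.volume)
    (MeasureTheory.ae_restrict_of_ae_restrict_of_subset Ioo_subset_Ioc_self hae)
    hf.continuousOn continuousOn_const

variable {ι κ : Type*} [Fintype ι] [Fintype κ]

theorem HasDerivAt.dotProduct {x y : ℝ → ι → ℝ} {x' y' : ι → ℝ} {t : ℝ}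
    (hx : HasDerivAt x x' t) (hy : HasDerivAt y y' t) :
    HasDerivAt (fun r => x r ⬝ᵥ y r) (x' ⬝ᵥ y t + x t ⬝ᵥ y') t := by
  simpa only [_root_.dotProduct, Finset.sum_add_distrib] using
    HasDerivAt.fun_sum fun i _ => (hasDerivAt_pi.1 hx i).fun_mul (hasDerivAt_pi.1 hy i)

omit [Fintype κ] in
theorem HasDerivAt.matrix_mulVec {M : ℝ → Matrix κ ι ℝ} {M' : Matrix κ ι ℝ}
    {y : ℝ → ι → ℝ} {y' : ι → ℝ} {t : ℝ}
    (hM : ∀ i j, HasDerivAt (fun r => M r i j) (M' i j) t) (hy : HasDerivAt y y' t) :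
    HasDerivAt (fun r => M r *ᵥ y r) (M' *ᵥ y t + M t *ᵥ y') t :=
  hasDerivAt_pi.2 fun i => (hasDerivAt_pi.2 (hM i)).dotProduct hy

theorem dotProduct_lyapunov_mulVec (A P F : Matrix ι ι ℝ) (x y : ι → ℝ) :
    -(A *ᵥ x) ⬝ᵥ (P *ᵥ y) + x ⬝ᵥ ((Aᵀ * P + P * A + F) *ᵥ y + P *ᵥ -(A *ᵥ y)) =
      x ⬝ᵥ (F *ᵥ y) := by
  simp only [add_mulVec, dotProduct_add, ← mulVec_mulVec, dotProduct_mulVec x Aᵀ,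
    vecMul_transpose, mulVec_neg, dotProduct_neg, neg_dotProduct]
  ring

theorem dotProduct_smul_transpose_mul_mulVec (c : ℝ) (C : Matrix κ ι ℝ) (x y : ι → ℝ) :
    x ⬝ᵥ ((c • (Cᵀ * C)) *ᵥ y) = c * ((C *ᵥ x) ⬝ᵥ (C *ᵥ y)) := by
  rw [smul_mulVec, dotProduct_smul, smul_eq_mul, ← mulVec_mulVec, dotProduct_mulVec,
    vecMul_transpose]

theorem Matrix.IsHermitian.dotProduct_mulVec_comm {M : Matrix ι ι ℝ} (hM : M.IsHermitian)
    (x y : ι → ℝ) : x ⬝ᵥ (M *ᵥ y) = y ⬝ᵥ (M *ᵥ x) := by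
  rw [dotProduct_mulVec, ← mulVec_transpose, (isHermitian_iff_isSymm.1 hM).eq, dotProduct_comm]

section DecidableEq

variable [DecidableEq ι]

theorem Matrix.apply_eq_single_dotProduct_mulVec_single (M : Matrix ι ι ℝ) (i j : ι) :
    M i j = Pi.single i 1 ⬝ᵥ (M *ᵥ Pi.single j 1) := by
  simp

theorem Matrix.trace_transpose_mul_mul_eq_sum (B M : Matrix ι ι ℝ) :
    (Bᵀ * M * B).trace = ∑ i, (B *ᵥ Pi.single i 1) ⬝ᵥ (M *ᵥ (B *ᵥ Pi.single i 1)) := by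
  simp only [trace, diag, mul_apply', mulVec_single_one, dotProduct_mulVec]
  rfl

theorem Matrix.trace_eq_sum (M : Matrix ι ι ℝ) :
    M.trace = ∑ i, Pi.single i 1 ⬝ᵥ (M *ᵥ Pi.single i 1) := by
  simpa only [transpose_one, one_mul, mul_one, one_mulVec] using
    trace_transpose_mul_mul_eq_sum 1 M

theorem Matrix.PosSemidef.trace_transpose_mul_mul_pos {M B : Matrix ι ι ℝ} (hM : M.PosSemidef)
    (hM0 : M ≠ 0) (hB : IsUnit B) : 0 < (Bᵀ * M * B).trace := by
  have h := hM.conjTranspose_mul_mul_same B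
  rw [conjTranspose_eq_transpose_of_trivial] at h
  refine h.trace_nonneg.lt_of_ne' fun h0 => hM0 ?_
  rwa [h.trace_eq_zero_iff, hB.mul_left_eq_zero,
    ((isUnit_transpose B).2 hB).mul_right_eq_zero] at h0

theorem hasDerivAt_exp_smul_mulVec (A : Matrix ι ι ℝ) (u : ι → ℝ) (t : ℝ) :
    HasDerivAt (fun r : ℝ => exp (r • A) *ᵥ u) (A *ᵥ (exp (t • A) *ᵥ u)) t := by
  -- any norm on matrices will do: `exp` and the derivative do not depend on it
  open scoped Matrix.Norms.Operator in
  let L : Matrix ι ι ℝ →L[ℝ] ι → ℝ :=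
    LinearMap.toContinuousLinearMap ((LinearMap.applyₗ u).comp Matrix.toLin'.toLinearMap)
  rw [mulVec_mulVec]
  exact L.hasFDerivAt.comp_hasDerivAt t (hasDerivAt_exp_smul_const' A t)

theorem hasDerivAt_exp_sub_smul_mulVec (A : Matrix ι ι ℝ) (u : ι → ℝ) (t s : ℝ) :
    HasDerivAt (fun r : ℝ => exp ((t - r) • A) *ᵥ u) (-(A *ᵥ (exp ((t - s) • A) *ᵥ u))) s :=
  (hasDerivAt_exp_smul_mulVec A u (t - s)).comp_const_sub t s

theorem continuous_exp_sub_smul_mulVec (A : Matrix ι ι ℝ) (u : ι → ℝ) (t : ℝ) :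
    Continuous fun r : ℝ => exp ((t - r) • A) *ᵥ u :=
  continuous_iff_continuousAt.2 fun s => (hasDerivAt_exp_sub_smul_mulVec A u t s).continuousAt

theorem mulVec_exp_smul_mulVec_pow_eq_zero (A : Matrix ι ι ℝ) (C : Matrix κ ι ℝ) {U : Set ℝ}
    (hU : IsOpen U) {v : ι → ℝ} (hv : ∀ u ∈ U, C *ᵥ (exp (u • A) *ᵥ v) = 0) (k : ℕ) :
    ∀ u ∈ U, C *ᵥ (exp (u • A) *ᵥ (A ^ k *ᵥ v)) = 0 := by
  induction k with
  | zero => simpa using hv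
  | succ k ih =>
    intro u hu
    have hderiv : HasDerivAt (fun r => C *ᵥ (exp (r • A) *ᵥ (A ^ k *ᵥ v)))
        (C *ᵥ (A *ᵥ (exp (u • A) *ᵥ (A ^ k *ᵥ v)))) u := by
      simpa only [zero_mulVec, zero_add] using HasDerivAt.matrix_mulVec (M' := 0)
        (fun i j => hasDerivAt_const u (C i j)) (hasDerivAt_exp_smul_mulVec A (A ^ k *ᵥ v) u)
    have hzero : HasDerivAt (fun r => C *ᵥ (exp (r • A) *ᵥ (A ^ k *ᵥ v))) 0 u :=
      (hasDerivAt_const u 0).congr_of_eventuallyEq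
        (Filter.eventually_of_mem (hU.mem_nhds hu) ih)
    have hcomm : exp (u • A) * A = A * exp (u • A) :=
      ((Commute.refl A).smul_right u).exp_right.symm.eq
    rw [pow_succ', ← mulVec_mulVec, mulVec_mulVec _ (exp (u • A)) A, hcomm, ← mulVec_mulVec]
    exact hderiv.unique hzero

theorem eq_zero_of_mulVec_exp_smul_mulVec_eqOn_zero {A : Matrix ι ι ℝ} {C : Matrix κ ι ℝ}
    {n : ℕ} (hObs : ∀ w, (∀ k < n, C *ᵥ (A ^ k *ᵥ w) = 0) → w = 0) {U : Set ℝ}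
    (hU : IsOpen U) (hUne : U.Nonempty) {v : ι → ℝ}
    (hv : ∀ u ∈ U, C *ᵥ (exp (u • A) *ᵥ v) = 0) : v = 0 := by
  obtain ⟨u, hu⟩ := hUne
  have hcomm (k : ℕ) : A ^ k * exp (u • A) = exp (u • A) * A ^ k :=
    ((Commute.refl A).smul_right u).exp_right.pow_left k
  have hexp : exp (u • A) *ᵥ v = 0 := hObs _ fun k _ => by
    rw [mulVec_mulVec v (A ^ k), hcomm, ← mulVec_mulVec]
    exact mulVec_exp_smul_mulVec_pow_eq_zero A C hU hv k u hu
  exact mulVec_injective_iff_isUnit.2 (isUnit_exp (u • A)) (hexp.trans (mulVec_zero _).symm)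

theorem dotProduct_mulVec_eq_add_integral {A : Matrix ι ι ℝ} {P F : ℝ → Matrix ι ι ℝ}
    (hP : ∀ s i j, HasDerivAt (fun r => P r i j) ((Aᵀ * P s + P s * A + F s) i j) s)
    (hF : Continuous F) (t : ℝ) (u w : ι → ℝ) :
    u ⬝ᵥ (P t *ᵥ w) = (exp (t • A) *ᵥ u) ⬝ᵥ (P 0 *ᵥ (exp (t • A) *ᵥ w)) +
      ∫ s in 0..t, (exp ((t - s) • A) *ᵥ u) ⬝ᵥ (F s *ᵥ (exp ((t - s) • A) *ᵥ w)) := by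
  have hderiv (s : ℝ) : HasDerivAt
      (fun r => (exp ((t - r) • A) *ᵥ u) ⬝ᵥ (P r *ᵥ (exp ((t - r) • A) *ᵥ w)))
      ((exp ((t - s) • A) *ᵥ u) ⬝ᵥ (F s *ᵥ (exp ((t - s) • A) *ᵥ w))) s := by
    rw [← dotProduct_lyapunov_mulVec A]
    exact (hasDerivAt_exp_sub_smul_mulVec A u t s).dotProduct
      (HasDerivAt.matrix_mulVec (hP s) (hasDerivAt_exp_sub_smul_mulVec A w t s))
  have hcont : Continuous fun s =>
      (exp ((t - s) • A) *ᵥ u) ⬝ᵥ (F s *ᵥ (exp ((t - s) • A) *ᵥ w)) :=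
    (continuous_exp_sub_smul_mulVec A u t).dotProduct
      (hF.matrix_mulVec (continuous_exp_sub_smul_mulVec A w t))
  rw [intervalIntegral.integral_eq_sub_of_hasDerivAt (fun s _ => hderiv s)
    (hcont.intervalIntegrable 0 t)]
  simp

namespace LyapunovFlow

variable {A : Matrix ι ι ℝ} {C : Matrix κ ι ℝ} {α : ℝ} {P : ℝ → Matrix ι ι ℝ}
  (hODE : ∀ t, ∀ i j, HasDerivAt (fun s => P s i j)
    ((Aᵀ * P t + P t * A + (α * (P t).trace) • (Cᵀ * C)) i j) t)
include hODE

omit [DecidableEq ι] in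
theorem continuous : Continuous P :=
  continuous_matrix fun i j =>
    continuous_iff_continuousAt.2 fun t => (hODE t i j).continuousAt

theorem dotProduct_mulVec_eq (t : ℝ) (u w : ι → ℝ) :
    u ⬝ᵥ (P t *ᵥ w) = (exp (t • A) *ᵥ u) ⬝ᵥ (P 0 *ᵥ (exp (t • A) *ᵥ w)) +
      ∫ s in 0..t, α * (P s).trace *
        ((C *ᵥ (exp ((t - s) • A) *ᵥ u)) ⬝ᵥ (C *ᵥ (exp ((t - s) • A) *ᵥ w))) := by
  have hF : Continuous fun s => (α * (P s).trace) • (Cᵀ * C) :=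
    (continuous_const.mul (continuous hODE).matrix_trace).smul continuous_const
  simp only [dotProduct_mulVec_eq_add_integral hODE hF t, dotProduct_smul_transpose_mul_mulVec]

theorem le_dotProduct_mulVec_self (hα : 0 ≤ α) {τ : ℝ} (hτ : 0 ≤ τ)
    (htr : ∀ s ∈ Icc 0 τ, 0 ≤ (P s).trace) (v : ι → ℝ) :
    (exp (τ • A) *ᵥ v) ⬝ᵥ (P 0 *ᵥ (exp (τ • A) *ᵥ v)) ≤ v ⬝ᵥ (P τ *ᵥ v) := by
  rw [dotProduct_mulVec_eq hODE τ v v, le_add_iff_nonneg_right]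
  exact intervalIntegral.integral_nonneg hτ fun s hs =>
    mul_nonneg (mul_nonneg hα (htr s hs)) (Fintype.sum_nonneg fun _ => mul_self_nonneg _)

theorem trace_pos (hα : 0 ≤ α) (hP0 : (P 0).PosSemidef) (hP0ne : P 0 ≠ 0) :
    ∀ τ, 0 ≤ τ → 0 < (P τ).trace := by
  refine forall_pos_of_forall_nonneg_Icc_imp_pos (continuous hODE).matrix_trace
    hP0.trace_nonneg fun τ hτ htr => ?_
  calc 0 < ((exp (τ • A))ᵀ * P 0 * exp (τ • A)).trace :=
        hP0.trace_transpose_mul_mul_pos hP0ne (isUnit_exp _)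
    _ ≤ (P τ).trace := by
      rw [trace_transpose_mul_mul_eq_sum, trace_eq_sum]
      exact Finset.sum_le_sum fun i _ => le_dotProduct_mulVec_self hODE hα hτ htr _

theorem isHermitian (hP0 : (P 0).IsHermitian) (t : ℝ) : (P t).IsHermitian := by
  ext i j
  rw [conjTranspose_apply, star_trivial, apply_eq_single_dotProduct_mulVec_single (P t) j,
    apply_eq_single_dotProduct_mulVec_single (P t) i, dotProduct_mulVec_eq hODE t,
    dotProduct_mulVec_eq hODE t, hP0.dotProduct_mulVec_comm]
  congr 1
  exact intervalIntegral.integral_congr fun s _ => by rw [dotProduct_comm]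

theorem mulVec_exp_smul_mulVec_eq_zero_of_dotProduct_mulVec_self_nonpos (hα : 0 < α)
    (hP0 : (P 0).PosSemidef) (htr : ∀ s, 0 ≤ s → 0 < (P s).trace) {t : ℝ} (ht : 0 < t)
    {v : ι → ℝ} (hv : v ⬝ᵥ (P t *ᵥ v) ≤ 0) : ∀ u ∈ Ioo 0 t, C *ᵥ (exp (u • A) *ᵥ v) = 0 := by
  set f := fun s => α * (P s).trace *
    ((C *ᵥ (exp ((t - s) • A) *ᵥ v)) ⬝ᵥ (C *ᵥ (exp ((t - s) • A) *ᵥ v)))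
  have hf_nonneg (s : ℝ) (hs : 0 ≤ s) : 0 ≤ f s :=
    mul_nonneg (mul_nonneg hα.le (htr s hs).le) (Fintype.sum_nonneg fun _ => mul_self_nonneg _)
  have hf_cont : Continuous f :=
    have hCx := continuous_const.matrix_mulVec (continuous_exp_sub_smul_mulVec A v t)
    (continuous_const.mul (continuous hODE).matrix_trace).mul (hCx.dotProduct hCx)
  have hf_int : ∫ s in 0..t, f s = 0 := by
    have hP0v : 0 ≤ (exp (t • A) *ᵥ v) ⬝ᵥ (P 0 *ᵥ (exp (t • A) *ᵥ v)) :=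
      hP0.dotProduct_mulVec_nonneg _
    have hf_int_nonneg : 0 ≤ ∫ s in 0..t, f s :=
      intervalIntegral.integral_nonneg ht.le fun s hs => hf_nonneg s hs.1
    linarith [dotProduct_mulVec_eq hODE t v v]
  intro u hu
  have hs : t - u ∈ Ioo 0 t := ⟨sub_pos.2 hu.2, sub_lt_self t hu.1⟩
  have hfu : f (t - u) = 0 :=
    eqOn_zero_of_integral_eq_zero hf_cont ht.le (fun s hs => hf_nonneg s hs.1.le) hf_int hs
  simpa only [f, sub_sub_cancel, mul_eq_zero, (mul_pos hα (htr _ hs.1.le)).ne', false_or,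
    dotProduct_self_eq_zero] using hfu

end LyapunovFlow

end DecidableEq

/-- If `(A,C)` is observable then the solution of
`dP/dt = AᵀP + PA + α·tr(P)·CᵀC` starting from a nonzero PSD matrix
is positive definite for all `t > 0`. -/
theorem lyapunov_flow_strictly_positive
    {n m : ℕ} (A : Matrix (Fin n) (Fin n) ℝ) (C : Matrix (Fin m) (Fin n) ℝ)
    (hObs : ∀ v : Fin n → ℝ, (∀ k < n, C *ᵥ ((A ^ k) *ᵥ v) = 0) → v = 0)
    (α : ℝ) (hα : 0 < α)
    (P : ℝ → Matrix (Fin n) (Fin n) ℝ)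
    (hP0 : (P 0).PosSemidef) (hP0ne : P 0 ≠ 0)
    (hODE : ∀ t, ∀ i j, HasDerivAt (fun s => P s i j)
      ((Aᵀ * P t + P t * A + (α * (P t).trace) • (Cᵀ * C)) i j) t) :
    ∀ t > 0, (P t).PosDef := by
  intro t ht
  have htr := LyapunovFlow.trace_pos hODE hα.le hP0 hP0ne
  refine posDef_iff_dotProduct_mulVec.2 ⟨LyapunovFlow.isHermitian hODE hP0.isHermitian t,
    fun v hv => ?_⟩
  rw [star_trivial]
  by_contra! hle
  exact hv (eq_zero_of_mulVec_exp_smul_mulVec_eqOn_zero hObs isOpen_Ioo (nonempty_Ioo.2 ht)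
    (LyapunovFlow.mulVec_exp_smul_mulVec_eq_zero_of_dotProduct_mulVec_self_nonpos
      hODE hα hP0 htr ht hle))
end

section
/- If A is Schur stable and (A,C) is observable, then for the discrete dynamics X_{k+1} = Aᵀ X_k A + α·tr(X_k)·CᵀC with α > 0 and X₀ a nonzero positive semidefinite matrix, X_k is positive definite for all k ≥ n. -/
/-! The quadratic forms `q_k x = xᵀ X_k x` satisfy `q_{k+1} x = q_k (A x) + α tr(X_k) ‖C x‖²`.
Inductively every `X_k` is positive semidefinite with positive trace (the trace gains at least
`α tr(X_k) tr(CᵀC) > 0` per step), and unrolling `j` steps shows that `q_{k+j} x` dominates a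
positive multiple of `‖C Aⁱ x‖²` for every `i < j`. For `j ≥ n` observability makes one of these
terms nonzero whenever `x ≠ 0`. -/

open Matrix

section QuadraticForm

variable {m n R : Type*} [Fintype m] [Fintype n] [CommSemiring R]

theorem Matrix.dotProduct_transpose_mul_mul_mulVec (B : Matrix m n R) (M : Matrix m m R)
    (x : n → R) : x ⬝ᵥ (Bᵀ * M * B) *ᵥ x = (B *ᵥ x) ⬝ᵥ M *ᵥ (B *ᵥ x) := by
  rw [← mulVec_mulVec, ← mulVec_mulVec, dotProduct_mulVec, vecMul_transpose]

theorem Matrix.dotProduct_transpose_mul_self_mulVec (B : Matrix m n R) (x : n → R) :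
    x ⬝ᵥ (Bᵀ * B) *ᵥ x = (B *ᵥ x) ⬝ᵥ (B *ᵥ x) := by
  rw [← mulVec_mulVec, dotProduct_mulVec, vecMul_transpose]

end QuadraticForm

section Iteration

variable {ι κ : Type*} [Fintype ι] [Fintype κ] {A : Matrix ι ι ℝ} {C : Matrix κ ι ℝ} {α : ℝ}
  {X : ℕ → Matrix ι ι ℝ}

theorem dotProduct_mulVec_succ_of_lyapunov
    (hRec : ∀ k, X (k + 1) = Aᵀ * X k * A + (α * (X k).trace) • (Cᵀ * C)) (k : ℕ) (x : ι → ℝ) :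
    x ⬝ᵥ X (k + 1) *ᵥ x =
      (A *ᵥ x) ⬝ᵥ X k *ᵥ (A *ᵥ x) + α * (X k).trace * ((C *ᵥ x) ⬝ᵥ (C *ᵥ x)) := by
  rw [hRec, add_mulVec, dotProduct_add, smul_mulVec, dotProduct_smul, smul_eq_mul,
    dotProduct_transpose_mul_mul_mulVec, dotProduct_transpose_mul_self_mulVec]

theorem posSemidef_and_trace_pos_of_lyapunov (hC : C ≠ 0) (hα : 0 < α)
    (hX0 : (X 0).PosSemidef) (hX0ne : X 0 ≠ 0)
    (hRec : ∀ k, X (k + 1) = Aᵀ * X k * A + (α * (X k).trace) • (Cᵀ * C)) (k : ℕ) :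
    (X k).PosSemidef ∧ 0 < (X k).trace := by
  have hCtC : (Cᵀ * C).PosSemidef := by
    simpa only [conjTranspose_eq_transpose_of_trivial] using posSemidef_conjTranspose_mul_self C
  have hCtC_trace : 0 < (Cᵀ * C).trace := by
    refine hCtC.trace_nonneg.lt_of_ne' fun h => hC ?_
    rwa [← conjTranspose_eq_transpose_of_trivial, trace_conjTranspose_mul_self_eq_zero_iff] at h
  induction k with
  | zero => exact ⟨hX0, hX0.trace_nonneg.lt_of_ne' fun h => hX0ne (hX0.trace_eq_zero_iff.mp h)⟩
  | succ k ih =>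
    have hconj : (Aᵀ * X k * A).PosSemidef := by
      simpa only [conjTranspose_eq_transpose_of_trivial] using ih.1.conjTranspose_mul_mul_same A
    have hcoeff : 0 < α * (X k).trace := mul_pos hα ih.2
    rw [hRec]
    refine ⟨hconj.add (hCtC.smul hcoeff.le), ?_⟩
    rw [trace_add, trace_smul, smul_eq_mul]
    nlinarith [hconj.trace_nonneg]

theorem dotProduct_mulVec_pos_of_lyapunov [DecidableEq ι] (hα : 0 < α)
    (hpos : ∀ k, (X k).PosSemidef ∧ 0 < (X k).trace)
    (hRec : ∀ k, X (k + 1) = Aᵀ * X k * A + (α * (X k).trace) • (Cᵀ * C)) (k j : ℕ)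
    (x : ι → ℝ) (hx : ∃ i < j, C *ᵥ (A ^ i *ᵥ x) ≠ 0) : 0 < x ⬝ᵥ X (k + j) *ᵥ x := by
  induction j generalizing x with
  | zero => simp at hx
  | succ j ih =>
    obtain ⟨i, hij, hi⟩ := hx
    have hnonneg : 0 ≤ (A *ᵥ x) ⬝ᵥ X (k + j) *ᵥ (A *ᵥ x) := by
      simpa only [star_trivial] using (hpos (k + j)).1.dotProduct_mulVec_nonneg (A *ᵥ x)
    have hcoeff : 0 < α * (X (k + j)).trace := mul_pos hα (hpos _).2
    rw [← add_assoc, dotProduct_mulVec_succ_of_lyapunov hRec]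
    cases i with
    | zero =>
      have hCx : 0 < (C *ᵥ x) ⬝ᵥ (C *ᵥ x) :=
        (dotProduct_self_star_pos_iff.mpr (by simpa using hi)).trans_eq (by rw [star_trivial])
      exact add_pos_of_nonneg_of_pos hnonneg (mul_pos hcoeff hCx)
    | succ i =>
      have hAx := ih (A *ᵥ x) ⟨i, by omega, by rwa [pow_succ, ← mulVec_mulVec] at hi⟩
      exact add_pos_of_pos_of_nonneg hAx (mul_nonneg hcoeff.le (dotProduct_star_self_nonneg _))

end Iteration

theorem discrete_lyapunov_iteration_ultimately_posdef_general
    {n m : ℕ} (A : Matrix (Fin n) (Fin n) ℝ) (C : Matrix (Fin m) (Fin n) ℝ)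
    (hObs : ∀ v : Fin n → ℝ, (∀ k < n, C *ᵥ ((A ^ k) *ᵥ v) = 0) → v = 0)
    (α : ℝ) (hα : 0 < α)
    (X : ℕ → Matrix (Fin n) (Fin n) ℝ)
    (hX0 : (X 0).PosSemidef) (hX0ne : X 0 ≠ 0)
    (hRec : ∀ k, X (k + 1) = Aᵀ * X k * A + (α * (X k).trace) • (Cᵀ * C)) :
    ∀ k ≥ n, (X k).PosDef := by
  -- For `C = 0` observability forces `Fin n → ℝ` to be trivial, contradicting `X 0 ≠ 0`.
  have hC : C ≠ 0 := by
    rintro rfl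
    refine hX0ne (ext fun i j => ?_)
    simpa using congrFun (hObs (Pi.single i (X 0 i j)) (by simp)) i
  have hpos := posSemidef_and_trace_pos_of_lyapunov hC hα hX0 hX0ne hRec
  intro k hk
  refine .of_dotProduct_mulVec_pos (hpos k).1.isHermitian fun x hx => ?_
  have hCx : ∃ i < n, C *ᵥ (A ^ i *ᵥ x) ≠ 0 := by
    by_contra! h
    exact hx (hObs x h)
  obtain ⟨j, rfl⟩ := Nat.exists_eq_add_of_le' hk
  simpa using dotProduct_mulVec_pos_of_lyapunov hα hpos hRec j n x hCx

/-- If `A` is Schur stable and `(A,C)` is observable, the discrete dynamics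
`X_{k+1} = AᵀX_k A + α·tr(X_k)·CᵀC` started at a nonzero PSD matrix is
positive definite for all `k ≥ n`. -/
theorem discrete_lyapunov_iteration_ultimately_posdef
    {n m : ℕ} (A : Matrix (Fin n) (Fin n) ℝ) (C : Matrix (Fin m) (Fin n) ℝ)
    (hSchur : ∀ μ ∈ spectrum ℂ (A.map Complex.ofReal), ‖μ‖ < 1)
    (hObs : ∀ v : Fin n → ℝ, (∀ k < n, C *ᵥ ((A ^ k) *ᵥ v) = 0) → v = 0)
    (α : ℝ) (hα : 0 < α)
    (X : ℕ → Matrix (Fin n) (Fin n) ℝ)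
    (hX0 : (X 0).PosSemidef) (hX0ne : X 0 ≠ 0)
    (hRec : ∀ k, X (k + 1) = Aᵀ * X k * A + (α * (X k).trace) • (Cᵀ * C)) :
    ∀ k ≥ n, (X k).PosDef :=
  discrete_lyapunov_iteration_ultimately_posdef_general A C hObs α hα X hX0 hX0ne hRec
end

section
/- Let R ≻ 0 and define S(X) = X − XB(R + BᵀXB)⁻¹BᵀX for positive semidefinite X. If X₁ ⪰ X₂ ⪰ 0 then S(X₁) ⪰ S(X₂) ⪰ 0. -/
set_option maxHeartbeats 1000000
open Matrix

lemma quad_psd {k l : ℕ} {X : Matrix (Fin k) (Fin k) ℝ} (hX : X.PosSemidef)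
    (A : Matrix (Fin k) (Fin l) ℝ) : (Aᵀ * X * A).PosSemidef := by
  simpa [← conjTranspose_eq_transpose_of_trivial] using hX.conjTranspose_mul_mul_same A

lemma sq_lemma {n m : ℕ} (B : Matrix (Fin n) (Fin m) ℝ) (X : Matrix (Fin n) (Fin n) ℝ)
    (R M : Matrix (Fin m) (Fin m) ℝ) (hX : Xᵀ = X)
    (hMdef : M = R + Bᵀ * X * B) (hMt : M⁻¹ᵀ = M⁻¹)
    (h1 : M⁻¹ * M = 1) (h2 : M * M⁻¹ = 1)
    (K : Matrix (Fin m) (Fin n) ℝ) :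
    (1 + B * K)ᵀ * X * (1 + B * K) + Kᵀ * R * K
      = (X - X * B * M⁻¹ * (Bᵀ * X))
        + (K + M⁻¹ * (Bᵀ * X))ᵀ * M * (K + M⁻¹ * (Bᵀ * X)) := by
  have e1 : ∀ Z : Matrix (Fin m) (Fin n) ℝ, M * (M⁻¹ * Z) = Z := by
    intro Z; rw [← Matrix.mul_assoc, h2, Matrix.one_mul]
  have e2 : ∀ Z : Matrix (Fin m) (Fin n) ℝ, M⁻¹ * (M * Z) = Z := by
    intro Z; rw [← Matrix.mul_assoc, h1, Matrix.one_mul]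
  simp only [transpose_add, transpose_mul, transpose_one, transpose_transpose, hX, hMt,
    Matrix.add_mul, Matrix.mul_add, Matrix.one_mul, Matrix.mul_one, Matrix.mul_assoc, e1, e2,
    sub_eq_add_neg]
  simp only [hMdef, Matrix.add_mul, Matrix.mul_add, Matrix.mul_assoc]
  abel

/-- Monotonicity of `S(X) = X − XB(R + BᵀXB)⁻¹BᵀX` in the Loewner order:
if `X₁ ⪰ X₂ ⪰ 0`, then `S(X₁) ⪰ S(X₂) ⪰ 0`. -/
theorem riccati_S_monotone
    {n m : ℕ} (R : Matrix (Fin m) (Fin m) ℝ) (B : Matrix (Fin n) (Fin m) ℝ)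
    (X₁ X₂ : Matrix (Fin n) (Fin n) ℝ)
    (hR : R.PosDef) (hX₂ : X₂.PosSemidef) (h12 : (X₁ - X₂).PosSemidef) :
    ((X₁ - X₁ * B * (R + Bᵀ * X₁ * B)⁻¹ * Bᵀ * X₁)
        - (X₂ - X₂ * B * (R + Bᵀ * X₂ * B)⁻¹ * Bᵀ * X₂)).PosSemidef ∧
      (X₂ - X₂ * B * (R + Bᵀ * X₂ * B)⁻¹ * Bᵀ * X₂).PosSemidef := by
  have hX₁ : X₁.PosSemidef := by simpa using h12.add hX₂
  have hX₁t : X₁ᵀ = X₁ := by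
    simpa [← conjTranspose_eq_transpose_of_trivial] using hX₁.isHermitian.eq
  have hX₂t : X₂ᵀ = X₂ := by
    simpa [← conjTranspose_eq_transpose_of_trivial] using hX₂.isHermitian.eq
  set M₁ := R + Bᵀ * X₁ * B with hM₁def
  set M₂ := R + Bᵀ * X₂ * B with hM₂def
  have hM₁ : M₁.PosDef := hR.add_posSemidef (quad_psd hX₁ B)
  have hM₂ : M₂.PosDef := hR.add_posSemidef (quad_psd hX₂ B)
  have hM₁d : IsUnit M₁.det := hM₁.det_pos.ne'.isUnit
  have hM₂d : IsUnit M₂.det := hM₂.det_pos.ne'.isUnit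
  have hM₁t : M₁⁻¹ᵀ = M₁⁻¹ := by
    rw [transpose_nonsing_inv]
    congr 1
    simpa [← conjTranspose_eq_transpose_of_trivial] using hM₁.isHermitian.eq
  have hM₂t : M₂⁻¹ᵀ = M₂⁻¹ := by
    rw [transpose_nonsing_inv]
    congr 1
    simpa [← conjTranspose_eq_transpose_of_trivial] using hM₂.isHermitian.eq
  set K₁ := -(M₁⁻¹ * (Bᵀ * X₁)) with hK₁def
  set K₂ := -(M₂⁻¹ * (Bᵀ * X₂)) with hK₂def
  have sq₁ := sq_lemma B X₁ R M₁ hX₁t hM₁def hM₁t (nonsing_inv_mul _ hM₁d) (mul_nonsing_inv _ hM₁d) K₁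
  have sq₂ := sq_lemma B X₂ R M₂ hX₂t hM₂def hM₂t (nonsing_inv_mul _ hM₂d) (mul_nonsing_inv _ hM₂d) K₂
  have sq₃ := sq_lemma B X₂ R M₂ hX₂t hM₂def hM₂t (nonsing_inv_mul _ hM₂d) (mul_nonsing_inv _ hM₂d) K₁
  -- square terms vanish for the optimal K
  have z₁ : K₁ + M₁⁻¹ * (Bᵀ * X₁) = 0 := by rw [hK₁def]; exact neg_add_cancel _
  have z₂ : K₂ + M₂⁻¹ * (Bᵀ * X₂) = 0 := by rw [hK₂def]; exact neg_add_cancel _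
  rw [z₁] at sq₁
  rw [z₂] at sq₂
  simp only [transpose_zero, Matrix.zero_mul, Matrix.mul_zero, add_zero] at sq₁ sq₂
  -- identify S(Xᵢ) with the left-assoc form in the goal
  have gS₁ : X₁ - X₁ * B * M₁⁻¹ * Bᵀ * X₁ = X₁ - X₁ * B * M₁⁻¹ * (Bᵀ * X₁) := by
    rw [Matrix.mul_assoc]
  have gS₂ : X₂ - X₂ * B * M₂⁻¹ * Bᵀ * X₂ = X₂ - X₂ * B * M₂⁻¹ * (Bᵀ * X₂) := by
    rw [Matrix.mul_assoc]
  constructor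
  · rw [gS₁, gS₂, ← sq₁]
    have diff : (1 + B * K₁)ᵀ * X₁ * (1 + B * K₁) + K₁ᵀ * R * K₁
        - (X₂ - X₂ * B * M₂⁻¹ * (Bᵀ * X₂))
        = (1 + B * K₁)ᵀ * (X₁ - X₂) * (1 + B * K₁)
          + (K₁ + M₂⁻¹ * (Bᵀ * X₂))ᵀ * M₂ * (K₁ + M₂⁻¹ * (Bᵀ * X₂)) := by
      have expand : (1 + B * K₁)ᵀ * X₁ * (1 + B * K₁)
          = (1 + B * K₁)ᵀ * (X₁ - X₂) * (1 + B * K₁) + (1 + B * K₁)ᵀ * X₂ * (1 + B * K₁) := by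
        rw [Matrix.mul_sub, Matrix.sub_mul]; abel
      rw [expand]
      have : (1 + B * K₁)ᵀ * X₂ * (1 + B * K₁) + K₁ᵀ * R * K₁
          - (X₂ - X₂ * B * M₂⁻¹ * (Bᵀ * X₂))
          = (K₁ + M₂⁻¹ * (Bᵀ * X₂))ᵀ * M₂ * (K₁ + M₂⁻¹ * (Bᵀ * X₂)) := by
        rw [sq₃]; abel
      rw [← this]; abel
    rw [diff]
    exact (quad_psd h12 _).add (quad_psd hM₂.posSemidef _)
  · rw [gS₂, ← sq₂]
    exact (quad_psd hX₂ _).add (quad_psd hR.posSemidef _)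
end

section
/- Let X ⪰ 0, R ≻ 0 and S(X) = X − XB(R + BᵀXB)⁻¹BᵀX. Then ker S(X) = ker X; in particular, for any vector v, vᵀS(X)v = 0 implies Xv = 0. -/
open Matrix

/-!
With `M = R + BᵀXB` and `u = M⁻¹BᵀXv`, completing the square gives
`vᵀS(X)v = (v - Bu)ᵀX(v - Bu) + uᵀRu`, a sum of two nonnegative terms. If it vanishes then
`u = 0` because `R ≻ 0`, hence `vᵀXv = 0` and so `Xv = 0` because `X ⪰ 0`. Conversely
`Xv = 0` kills both terms of `S(X)v = Xv - XBM⁻¹BᵀXv`.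
-/

namespace Matrix

variable {ι κ : Type*} [Fintype ι] [Fintype κ]

noncomputable def riccatiS {𝕜 : Type*} [CommRing 𝕜] [DecidableEq κ]
    (X : Matrix ι ι 𝕜) (R : Matrix κ κ 𝕜) (B : Matrix ι κ 𝕜) : Matrix ι ι 𝕜 :=
  X - X * B * (R + Bᵀ * X * B)⁻¹ * Bᵀ * X

theorem dotProduct_riccatiS_mulVec {𝕜 : Type*} [CommRing 𝕜] [DecidableEq κ]
    {X : Matrix ι ι 𝕜} (R : Matrix κ κ 𝕜) (B : Matrix ι κ 𝕜)
    (hM : IsUnit (R + Bᵀ * X * B).det) (v : ι → 𝕜) :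
    let u := (R + Bᵀ * X * B)⁻¹ *ᵥ (Bᵀ *ᵥ (X *ᵥ v))
    v ⬝ᵥ (riccatiS X R B *ᵥ v) = (v - B *ᵥ u) ⬝ᵥ (X *ᵥ (v - B *ᵥ u)) + u ⬝ᵥ (R *ᵥ u) := by
  intro u
  set a := X *ᵥ v
  set c := B *ᵥ u
  have hMu : (R + Bᵀ * X * B) *ᵥ u = Bᵀ *ᵥ a := by
    rw [mulVec_mulVec, mul_nonsing_inv _ hM, one_mulVec]
  have hSv : riccatiS X R B *ᵥ v = a - X *ᵥ c := by
    simp only [riccatiS, sub_mulVec, mulVec_mulVec, Matrix.mul_assoc, a, c, u]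
  have hsquare : c ⬝ᵥ (X *ᵥ c) + u ⬝ᵥ (R *ᵥ u) = c ⬝ᵥ a := by
    have : u ⬝ᵥ ((R + Bᵀ * X * B) *ᵥ u) = u ⬝ᵥ (R *ᵥ u) + c ⬝ᵥ (X *ᵥ c) := by
      rw [add_mulVec, dotProduct_add, ← mulVec_mulVec, ← mulVec_mulVec, dotProduct_mulVec u Bᵀ,
        vecMul_transpose]
    calc c ⬝ᵥ (X *ᵥ c) + u ⬝ᵥ (R *ᵥ u) = u ⬝ᵥ ((R + Bᵀ * X * B) *ᵥ u) := by rw [this, add_comm]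
      _ = c ⬝ᵥ a := by rw [hMu, dotProduct_mulVec, vecMul_transpose]
  simp only [hSv, mulVec_sub, sub_dotProduct, dotProduct_sub]
  linear_combination -hsquare

theorem PosDef.add_transpose_mul_mul {R : Matrix κ κ ℝ} {X : Matrix ι ι ℝ} (hR : R.PosDef)
    (hX : X.PosSemidef) (B : Matrix ι κ ℝ) : (R + Bᵀ * X * B).PosDef :=
  hR.add_posSemidef (by simpa using hX.conjTranspose_mul_mul_same B)

variable [DecidableEq κ] {X : Matrix ι ι ℝ} {R : Matrix κ κ ℝ}

theorem PosSemidef.mulVec_eq_zero_of_dotProduct_riccatiS_mulVec_eq_zero (hX : X.PosSemidef)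
    (hR : R.PosDef) (B : Matrix ι κ ℝ) {v : ι → ℝ} (hv : v ⬝ᵥ (riccatiS X R B *ᵥ v) = 0) :
    X *ᵥ v = 0 := by
  have hM := (hR.add_transpose_mul_mul hX B).det_pos.ne'.isUnit
  rw [dotProduct_riccatiS_mulVec R B hM v] at hv
  set u := (R + Bᵀ * X * B)⁻¹ *ᵥ (Bᵀ *ᵥ (X *ᵥ v))
  have hX_nonneg : 0 ≤ (v - B *ᵥ u) ⬝ᵥ (X *ᵥ (v - B *ᵥ u)) := by
    simpa using hX.dotProduct_mulVec_nonneg (v - B *ᵥ u)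
  have hR_nonneg : 0 ≤ u ⬝ᵥ (R *ᵥ u) := by
    simpa using hR.posSemidef.dotProduct_mulVec_nonneg u
  have hu : u = 0 := by
    by_contra hu
    have := hR.dotProduct_mulVec_pos hu
    simp only [star_trivial] at this
    linarith
  rw [hu, mulVec_zero, sub_zero, zero_dotProduct, add_zero] at hv
  exact (hX.dotProduct_mulVec_zero_iff v).1 (by simpa using hv)

theorem PosSemidef.riccatiS_mulVec_eq_zero_iff (hX : X.PosSemidef) (hR : R.PosDef)
    (B : Matrix ι κ ℝ) (v : ι → ℝ) : riccatiS X R B *ᵥ v = 0 ↔ X *ᵥ v = 0 := by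
  refine ⟨fun h => hX.mulVec_eq_zero_of_dotProduct_riccatiS_mulVec_eq_zero hR B ?_, fun h => ?_⟩
  · rw [h, dotProduct_zero]
  · rw [riccatiS, sub_mulVec, ← mulVec_mulVec, h, mulVec_zero, sub_zero]

end Matrix

/-- For `X ⪰ 0`, `R ≻ 0`, and `S(X) = X − XB(R + BᵀXB)⁻¹BᵀX`, we have
`ker S(X) = ker X`; in particular `vᵀS(X)v = 0` implies `Xv = 0`. -/
theorem riccati_S_kernel
    {n m : ℕ} (X : Matrix (Fin n) (Fin n) ℝ) (R : Matrix (Fin m) (Fin m) ℝ)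
    (B : Matrix (Fin n) (Fin m) ℝ)
    (hX : X.PosSemidef) (hR : R.PosDef) :
    (∀ v : Fin n → ℝ,
        (X - X * B * (R + Bᵀ * X * B)⁻¹ * Bᵀ * X) *ᵥ v = 0 ↔ X *ᵥ v = 0) ∧
      (∀ v : Fin n → ℝ,
        v ⬝ᵥ ((X - X * B * (R + Bᵀ * X * B)⁻¹ * Bᵀ * X) *ᵥ v) = 0 →
          X *ᵥ v = 0) :=
  ⟨hX.riccatiS_mulVec_eq_zero_iff hR B,
    fun _ => hX.mulVec_eq_zero_of_dotProduct_riccatiS_mulVec_eq_zero hR B⟩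
end

section
/- (Monotonicity of the Schur complement) Let P = [[P₁, P₂],[P₂ᵀ, P₃]] and Q = [[Q₁, Q₂],[Q₂ᵀ, Q₃]] be positive semidefinite block matrices. If P ⪰ Q then P₁ − P₂ P₃† P₂ᵀ ⪰ Q₁ − Q₂ Q₃† Q₂ᵀ ⪰ 0, where † denotes the Moore–Penrose pseudoinverse. -/
/-! Let `D'` be a symmetric generalized inverse of `D` (`D D' D = D`), e.g. its Moore–Penrose
inverse. Positivity of `M = [[A, B], [Bᵀ, D]]` forces `ker D ⊆ ker B`, i.e. `B D' D = B`, and then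
completing the square gives, with `G = D' Bᵀ`,
`(x, y)ᵀ M (x, y) = xᵀ (A - B D' Bᵀ) x + (G x + y)ᵀ D (G x + y)`.
So the quadratic form of the Schur complement `S` is the minimum over `y` of that of `M`, attained
at `y = -G x`. Hence `S ⪰ 0`, and if `P ⪰ Q`, evaluating at the minimiser `v` for `P` gives
`xᵀ S_P x = vᵀ P v ≥ vᵀ Q v ≥ xᵀ S_Q x`. -/

open Matrix

/-- `M'` is the Moore–Penrose pseudoinverse of `M`. -/
def IsMoorePenroseInv {m : ℕ} (M M' : Matrix (Fin m) (Fin m) ℝ) : Prop :=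
  M * M' * M = M ∧ M' * M * M' = M' ∧ (M * M')ᵀ = M * M' ∧ (M' * M)ᵀ = M' * M

namespace IsMoorePenroseInv

variable {m : ℕ} {M M' M'' : Matrix (Fin m) (Fin m) ℝ}

theorem transpose (h : IsMoorePenroseInv M M') : IsMoorePenroseInv Mᵀ M'ᵀ := by
  obtain ⟨h₁, h₂, h₃, h₄⟩ := h
  refine ⟨?_, ?_, ?_, ?_⟩
  · rw [← transpose_mul, ← transpose_mul, ← Matrix.mul_assoc, h₁]
  · rw [← transpose_mul, ← transpose_mul, ← Matrix.mul_assoc, h₂]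
  · rw [← transpose_mul, transpose_transpose, h₄]
  · rw [← transpose_mul, transpose_transpose, h₃]

theorem unique (h : IsMoorePenroseInv M M') (h' : IsMoorePenroseInv M M'') : M' = M'' := by
  obtain ⟨h₁, h₂, h₃, h₄⟩ := h
  obtain ⟨h₁', h₂', h₃', h₄'⟩ := h'
  have hleft : M * M' = M * M'' :=
    calc M * M' = (M * M'' * (M * M'))ᵀ := by rw [← Matrix.mul_assoc, h₁', h₃]
      _ = M * M' * (M * M'') := by rw [transpose_mul, h₃, h₃']
      _ = M * M'' := by rw [← Matrix.mul_assoc, h₁]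
  have hright : M' * M = M'' * M :=
    calc M' * M = (M' * M * (M'' * M))ᵀ := by
          rw [Matrix.mul_assoc, ← Matrix.mul_assoc M M'' M, h₁', h₄]
      _ = M'' * M * (M' * M) := by rw [transpose_mul, h₄, h₄']
      _ = M'' * M := by rw [Matrix.mul_assoc, ← Matrix.mul_assoc M M' M, h₁]
  calc M' = M' * M * M' := h₂.symm
    _ = M'' * M * M'' := by rw [Matrix.mul_assoc, hleft, ← Matrix.mul_assoc, hright]
    _ = M'' := h₂'

theorem isSymm (hM : M.IsSymm) (h : IsMoorePenroseInv M M') : M'.IsSymm :=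
  (hM.eq ▸ h.transpose).unique h

end IsMoorePenroseInv

theorem Matrix.PosSemidef.toBlocks₂₂ {ι κ : Type*} {M : Matrix (ι ⊕ κ) (ι ⊕ κ) ℝ}
    (h : M.PosSemidef) : M.toBlocks₂₂.PosSemidef :=
  h.submatrix Sum.inr

section Blocks

variable {ι κ : Type*} [Fintype ι] [Fintype κ] {A : Matrix ι ι ℝ} {B : Matrix ι κ ℝ}
  {D D' : Matrix κ κ ℝ}

theorem Matrix.dotProduct_fromBlocks_mulVec_eq_schur (hD : D.IsSymm)
    (hD'symm : D'.IsSymm) (hBD : B * D' * D = B) (x : ι → ℝ) (y : κ → ℝ) :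
    (x ⊕ᵥ y) ⬝ᵥ (fromBlocks A B Bᵀ D *ᵥ (x ⊕ᵥ y)) =
      x ⬝ᵥ ((A - B * D' * Bᵀ) *ᵥ x) + ((D' * Bᵀ) *ᵥ x + y) ⬝ᵥ (D *ᵥ ((D' * Bᵀ) *ᵥ x + y)) := by
  have hBD' : (D' * Bᵀ)ᵀ * D = B := by rw [transpose_mul, hD'symm, transpose_transpose, hBD]
  have hDB : D * (D' * Bᵀ) = Bᵀ := by
    rw [← hD.eq, ← transpose_transpose (D' * Bᵀ), ← transpose_mul, hBD']
  have hGD : ((D' * Bᵀ) *ᵥ x) ᵥ* D = x ᵥ* B := by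
    rw [← vecMul_transpose, vecMul_vecMul, hBD']
  simp only [fromBlocks_mulVec, sumElim_dotProduct_sumElim, Sum.elim_comp_inl, Sum.elim_comp_inr,
    mulVec_add, dotProduct_add, add_dotProduct, sub_mulVec, dotProduct_sub, mulVec_mulVec, hDB,
    dotProduct_mulVec, vecMul_transpose, add_vecMul, hGD]
  rw [dotProduct_comm (B *ᵥ y), dotProduct_comm ((B * (D' * Bᵀ)) *ᵥ x), dotProduct_mulVec,
    dotProduct_mulVec, Matrix.mul_assoc]
  ring

namespace Matrix.PosSemidef

theorem mulVec_eq_zero_of_fromBlocks (h : (fromBlocks A B Bᵀ D).PosSemidef) {z : κ → ℝ}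
    (hz : D *ᵥ z = 0) : B *ᵥ z = 0 := by
  have hker : fromBlocks A B Bᵀ D *ᵥ (0 ⊕ᵥ z) = 0 :=
    (h.dotProduct_mulVec_zero_iff _).mp <| by
      simp [fromBlocks_mulVec, hz, sumElim_dotProduct_sumElim]
  funext i
  simpa [fromBlocks_mulVec] using congrFun hker (Sum.inl i)

theorem mul_mul_eq_of_fromBlocks (h : (fromBlocks A B Bᵀ D).PosSemidef)
    (hD' : D * D' * D = D) : B * D' * D = B := by
  refine ext_iff_mulVec.mpr fun w => ?_
  have hker : D *ᵥ ((D' * D) *ᵥ w - w) = 0 := by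
    rw [mulVec_sub, mulVec_mulVec, ← Matrix.mul_assoc, hD', sub_self]
  have := h.mulVec_eq_zero_of_fromBlocks hker
  rwa [mulVec_sub, mulVec_mulVec, ← Matrix.mul_assoc, sub_eq_zero] at this

theorem dotProduct_schur_mulVec_le (h : (fromBlocks A B Bᵀ D).PosSemidef)
    (hD' : D * D' * D = D) (hD'symm : D'.IsSymm) (x : ι → ℝ) (y : κ → ℝ) :
    x ⬝ᵥ ((A - B * D' * Bᵀ) *ᵥ x) ≤ (x ⊕ᵥ y) ⬝ᵥ (fromBlocks A B Bᵀ D *ᵥ (x ⊕ᵥ y)) := by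
  have hD : D.PosSemidef := h.toBlocks₂₂
  rw [dotProduct_fromBlocks_mulVec_eq_schur (isHermitian_iff_isSymm.mp hD.1) hD'symm
    (h.mul_mul_eq_of_fromBlocks hD')]
  simpa using hD.dotProduct_mulVec_nonneg ((D' * Bᵀ) *ᵥ x + y)

theorem dotProduct_schur_mulVec_eq (h : (fromBlocks A B Bᵀ D).PosSemidef)
    (hD' : D * D' * D = D) (hD'symm : D'.IsSymm) (x : ι → ℝ) :
    x ⬝ᵥ ((A - B * D' * Bᵀ) *ᵥ x) =
      (x ⊕ᵥ -((D' * Bᵀ) *ᵥ x)) ⬝ᵥ (fromBlocks A B Bᵀ D *ᵥ (x ⊕ᵥ -((D' * Bᵀ) *ᵥ x))) := by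
  have hD : D.IsSymm := isHermitian_iff_isSymm.mp h.toBlocks₂₂.1
  simp [dotProduct_fromBlocks_mulVec_eq_schur hD hD'symm (h.mul_mul_eq_of_fromBlocks hD')]

theorem schur_complement (h : (fromBlocks A B Bᵀ D).PosSemidef) (hD' : D * D' * D = D)
    (hD'symm : D'.IsSymm) : (A - B * D' * Bᵀ).PosSemidef := by
  have hA : A.IsHermitian := (isHermitian_fromBlocks_iff.mp h.1).1
  refine .of_dotProduct_mulVec_nonneg (hA.sub ?_) fun x => ?_
  · simpa using isHermitian_mul_mul_conjTranspose B (isHermitian_iff_isSymm.mpr hD'symm)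
  · rw [star_trivial, h.dotProduct_schur_mulVec_eq hD' hD'symm]
    simpa using h.dotProduct_mulVec_nonneg _

theorem schur_complement_mono {A₁ A₂ : Matrix ι ι ℝ} {B₁ B₂ : Matrix ι κ ℝ}
    {D₁ D₂ D₁' D₂' : Matrix κ κ ℝ} (h₁ : (fromBlocks A₁ B₁ B₁ᵀ D₁).PosSemidef)
    (h₂ : (fromBlocks A₂ B₂ B₂ᵀ D₂).PosSemidef)
    (h₁₂ : (fromBlocks A₁ B₁ B₁ᵀ D₁ - fromBlocks A₂ B₂ B₂ᵀ D₂).PosSemidef)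
    (hD₁' : D₁ * D₁' * D₁ = D₁) (hD₁'symm : D₁'.IsSymm)
    (hD₂' : D₂ * D₂' * D₂ = D₂) (hD₂'symm : D₂'.IsSymm) :
    ((A₁ - B₁ * D₁' * B₁ᵀ) - (A₂ - B₂ * D₂' * B₂ᵀ)).PosSemidef := by
  refine .of_dotProduct_mulVec_nonneg
    ((h₁.schur_complement hD₁' hD₁'symm).1.sub (h₂.schur_complement hD₂' hD₂'symm).1)
    fun x => ?_
  set y := -((D₁' * B₁ᵀ) *ᵥ x)
  have h₂_le := h₂.dotProduct_schur_mulVec_le hD₂' hD₂'symm x y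
  have h₁₂_nonneg := h₁₂.dotProduct_mulVec_nonneg (x ⊕ᵥ y)
  rw [star_trivial, sub_mulVec, dotProduct_sub] at h₁₂_nonneg ⊢
  rw [h₁.dotProduct_schur_mulVec_eq hD₁' hD₁'symm x]
  linarith

end Matrix.PosSemidef

end Blocks

/-- Monotonicity of the Schur complement: if `P ⪰ Q ⪰ 0` (as block PSD
matrices), then `P₁ − P₂P₃†P₂ᵀ ⪰ Q₁ − Q₂Q₃†Q₂ᵀ ⪰ 0`. -/
theorem schur_complement_monotone
    {n m : ℕ}
    (P₁ Q₁ : Matrix (Fin n) (Fin n) ℝ) (P₂ Q₂ : Matrix (Fin n) (Fin m) ℝ)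
    (P₃ Q₃ P₃d Q₃d : Matrix (Fin m) (Fin m) ℝ)
    (hP : (Matrix.fromBlocks P₁ P₂ P₂ᵀ P₃).PosSemidef)
    (hQ : (Matrix.fromBlocks Q₁ Q₂ Q₂ᵀ Q₃).PosSemidef)
    (hPQ : (Matrix.fromBlocks P₁ P₂ P₂ᵀ P₃
              - Matrix.fromBlocks Q₁ Q₂ Q₂ᵀ Q₃).PosSemidef)
    (hP₃ : IsMoorePenroseInv P₃ P₃d) (hQ₃ : IsMoorePenroseInv Q₃ Q₃d) :
    ((P₁ - P₂ * P₃d * P₂ᵀ) - (Q₁ - Q₂ * Q₃d * Q₂ᵀ)).PosSemidef ∧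
      (Q₁ - Q₂ * Q₃d * Q₂ᵀ).PosSemidef := by
  have hP₃d := hP₃.isSymm (isHermitian_iff_isSymm.mp hP.toBlocks₂₂.1)
  have hQ₃d := hQ₃.isSymm (isHermitian_iff_isSymm.mp hQ.toBlocks₂₂.1)
  exact ⟨hP.schur_complement_mono hQ hPQ hP₃.1 hP₃d hQ₃.1 hQ₃d,
    hQ.schur_complement hQ₃.1 hQ₃d⟩
end

section
/- Define F(X) = AᵀS(X)A + α·tr(X)·CᵀC where S(X) = X − XB(α·tr(X)·R + BᵀXB)⁻¹BᵀX, with R ≻ 0 and α > 0. Then F is positively homogeneous of degree 1 and order-preserving on the cone of positive semidefinite matrices (X ⪰ Y ⪰ 0 implies F(X) ⪰ F(Y) ⪰ 0). -/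
open Matrix

/-- The homogenized Riccati operator
`F(X) = AᵀS(X)A + α·tr(X)·CᵀC`, `S(X) = X − XB(α·tr(X)·R + BᵀXB)⁻¹BᵀX`. -/
noncomputable def riccOp {n m p : ℕ} (A : Matrix (Fin n) (Fin n) ℝ)
    (B : Matrix (Fin n) (Fin m) ℝ) (C : Matrix (Fin p) (Fin n) ℝ)
    (R : Matrix (Fin m) (Fin m) ℝ) (α : ℝ)
    (X : Matrix (Fin n) (Fin n) ℝ) : Matrix (Fin n) (Fin n) ℝ :=
  Aᵀ * (X - X * B * ((α * X.trace) • R + Bᵀ * X * B)⁻¹ * Bᵀ * X) * A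
    + (α * X.trace) • (Cᵀ * C)

/-!
`S(X)` is the Kalman covariance update `S_D(X) = X − XB(D + BᵀXB)⁻¹BᵀX` with observation
matrix `Bᵀ` and noise covariance `D = α·tr(X)·R`. Completing the square shows that `S_D(X)` is
the minimum over gains `K` of the Joseph form `J_K(D, X) = (1 − KBᵀ)X(1 − KBᵀ)ᵀ + KDKᵀ`,
attained at `K = XB(D + BᵀXB)⁻¹`. Since `J_K` is linear and monotone in `(D, X)`, comparing
both sides at the optimal gain for `X` gives
`S_D(X) − S_{D'}(Y) = J_K(D − D', X − Y) + (psd remainder) ⪰ 0` whenever `X ⪰ Y ⪰ 0` and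
`D ⪰ D' ≻ 0`. With `D = α·tr(X)·R` this is monotonicity of `F`; homogeneity is a scaling
computation, and the degenerate case `tr Y = 0` forces `Y = 0`.
-/

section KalmanUpdate

variable {n m 𝕜 : Type*} [Fintype n] [Fintype m]

section CommRing

variable [CommRing 𝕜]

noncomputable def kalmanUpdate [DecidableEq m] (B : Matrix n m 𝕜) (D : Matrix m m 𝕜)
    (X : Matrix n n 𝕜) : Matrix n n 𝕜 :=
  X - X * B * (D + Bᵀ * X * B)⁻¹ * Bᵀ * X

def josephForm [DecidableEq n] (B : Matrix n m 𝕜) (D : Matrix m m 𝕜) (K : Matrix n m 𝕜)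
    (X : Matrix n n 𝕜) : Matrix n n 𝕜 :=
  (1 - K * Bᵀ) * X * (1 - K * Bᵀ)ᵀ + K * D * Kᵀ

lemma josephForm_sub [DecidableEq n] (B : Matrix n m 𝕜) (D D' : Matrix m m 𝕜)
    (K : Matrix n m 𝕜) (X X' : Matrix n n 𝕜) :
    josephForm B D K X - josephForm B D' K X' = josephForm B (D - D') K (X - X') := by
  simp only [josephForm, Matrix.mul_sub, Matrix.sub_mul]
  abel

lemma josephForm_eq_kalmanUpdate_add [DecidableEq n] [DecidableEq m] {B : Matrix n m 𝕜}
    {D : Matrix m m 𝕜} {X : Matrix n n 𝕜} (hX : Xᵀ = X) (hD : Dᵀ = D)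
    (hM : IsUnit (D + Bᵀ * X * B).det) (K : Matrix n m 𝕜) :
    josephForm B D K X = kalmanUpdate B D X
      + (K - X * B * (D + Bᵀ * X * B)⁻¹) * (D + Bᵀ * X * B)
        * (K - X * B * (D + Bᵀ * X * B)⁻¹)ᵀ := by
  set M := D + Bᵀ * X * B with hMdef
  have hMt : Mᵀ = M := by simp [M, hX, hD, Matrix.mul_assoc]
  have hNt : M⁻¹ᵀ = M⁻¹ := by rw [transpose_nonsing_inv, hMt]
  have hMN (Z : Matrix m n 𝕜) : M * (M⁻¹ * Z) = Z := mul_nonsing_inv_cancel_left M Z hM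
  have hNM (Z : Matrix m n 𝕜) : M⁻¹ * (M * Z) = Z := nonsing_inv_mul_cancel_left M Z hM
  calc josephForm B D K X = X - K * Bᵀ * X - X * B * Kᵀ + K * M * Kᵀ := by
        simp only [josephForm, hMdef, transpose_sub, transpose_mul, transpose_one,
          transpose_transpose, Matrix.mul_sub, Matrix.sub_mul, Matrix.mul_add, Matrix.add_mul,
          Matrix.mul_one, Matrix.one_mul, Matrix.mul_assoc]
        abel
    _ = _ := by
        rw [kalmanUpdate, ← hMdef]
        simp only [transpose_sub, transpose_mul, hX, hNt, Matrix.mul_sub, Matrix.sub_mul,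
          Matrix.mul_assoc, hMN, hNM]
        abel

end CommRing

section Field

variable {K : Type*} [Field K] [DecidableEq m]

lemma Matrix.inv_smul_of_ne_zero {c : K} (hc : c ≠ 0) (M : Matrix m m K) :
    (c • M)⁻¹ = c⁻¹ • M⁻¹ := by
  by_cases h : IsUnit M.det
  · exact inv_smul' M (Units.mk0 c hc) h
  · have h' : ¬IsUnit (c • M).det := by
      rw [det_smul]
      exact fun hu => h (IsUnit.mul_iff.mp hu).2
    rw [nonsing_inv_apply_not_isUnit _ h, nonsing_inv_apply_not_isUnit _ h', smul_zero]

lemma kalmanUpdate_smul {c : K} (hc : c ≠ 0) (B : Matrix n m K) (D : Matrix m m K)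
    (X : Matrix n n K) : kalmanUpdate B (c • D) (c • X) = c • kalmanUpdate B D X := by
  have hM : c • D + Bᵀ * (c • X) * B = c • (D + Bᵀ * X * B) := by
    rw [smul_add, Matrix.mul_smul, Matrix.smul_mul]
  rw [kalmanUpdate, kalmanUpdate, hM, Matrix.inv_smul_of_ne_zero hc]
  simp only [Matrix.smul_mul, Matrix.mul_smul, smul_smul, smul_sub]
  rw [mul_inv_cancel_left₀ hc]

end Field

section Real

lemma Matrix.PosSemidef.mul_mul_transpose_same {k : Type*} [Fintype k] {X : Matrix n n ℝ}
    (hX : X.PosSemidef) (G : Matrix k n ℝ) : (G * X * Gᵀ).PosSemidef := by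
  simpa using hX.mul_mul_conjTranspose_same G

lemma Matrix.PosSemidef.transpose_mul_mul_same {k : Type*} [Fintype k] {X : Matrix n n ℝ}
    (hX : X.PosSemidef) (G : Matrix n k ℝ) : (Gᵀ * X * G).PosSemidef := by
  simpa using hX.conjTranspose_mul_mul_same G

lemma Matrix.posSemidef_transpose_mul_self {k : Type*} [Fintype k] (G : Matrix k n ℝ) :
    (Gᵀ * G).PosSemidef := by
  simpa using posSemidef_conjTranspose_mul_self G

variable [DecidableEq n]

lemma josephForm_posSemidef {B : Matrix n m ℝ} {D : Matrix m m ℝ} {X : Matrix n n ℝ}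
    (hD : D.PosSemidef) (hX : X.PosSemidef) (K : Matrix n m ℝ) :
    (josephForm B D K X).PosSemidef :=
  (hX.mul_mul_transpose_same _).add (hD.mul_mul_transpose_same K)

variable [DecidableEq m]

lemma kalmanUpdate_sub_posSemidef {B : Matrix n m ℝ} {D D' : Matrix m m ℝ}
    {X Y : Matrix n n ℝ} (hD' : D'.PosDef) (hDD' : (D - D').PosSemidef)
    (hY : Y.PosSemidef) (hXY : (X - Y).PosSemidef) :
    (kalmanUpdate B D X - kalmanUpdate B D' Y).PosSemidef := by
  have hX : X.PosSemidef := by simpa using hXY.add hY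
  have hD : D.PosDef := by simpa using hD'.posSemidef_add hDD'
  have hM {E : Matrix m m ℝ} {Z : Matrix n n ℝ} (hE : E.PosDef) (hZ : Z.PosSemidef) :
      (E + Bᵀ * Z * B).PosDef :=
    hE.add_posSemidef (hZ.transpose_mul_mul_same B)
  set K := X * B * (D + Bᵀ * X * B)⁻¹
  have hJX : josephForm B D K X = kalmanUpdate B D X := by
    rw [josephForm_eq_kalmanUpdate_add (D := D) (X := X) hX.1 hD.1
      (hM hD hX).det_pos.ne'.isUnit, sub_self, Matrix.zero_mul, Matrix.zero_mul, add_zero]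
  have hJY := josephForm_eq_kalmanUpdate_add (D := D') (X := Y) hY.1 hD'.1
    (hM hD' hY).det_pos.ne'.isUnit K
  have hdiff : kalmanUpdate B D X - kalmanUpdate B D' Y = josephForm B (D - D') K (X - Y)
      + (K - Y * B * (D' + Bᵀ * Y * B)⁻¹) * (D' + Bᵀ * Y * B)
        * (K - Y * B * (D' + Bᵀ * Y * B)⁻¹)ᵀ := by
    rw [← josephForm_sub, hJX, hJY]
    abel
  rw [hdiff]
  exact (josephForm_posSemidef hDD' hXY K).add ((hM hD' hY).posSemidef.mul_mul_transpose_same _)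

lemma kalmanUpdate_posSemidef {B : Matrix n m ℝ} {D : Matrix m m ℝ} {X : Matrix n n ℝ}
    (hD : D.PosDef) (hX : X.PosSemidef) : (kalmanUpdate B D X).PosSemidef := by
  simpa [kalmanUpdate] using
    kalmanUpdate_sub_posSemidef (B := B) hD (by simpa using PosSemidef.zero) PosSemidef.zero
      (by simpa using hX)

end Real

end KalmanUpdate

section riccOp

variable {n m p : ℕ} (A : Matrix (Fin n) (Fin n) ℝ) (B : Matrix (Fin n) (Fin m) ℝ)
  (C : Matrix (Fin p) (Fin n) ℝ) (R : Matrix (Fin m) (Fin m) ℝ) (α : ℝ)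

lemma riccOp_eq_kalmanUpdate (X : Matrix (Fin n) (Fin n) ℝ) :
    riccOp A B C R α X
      = Aᵀ * kalmanUpdate B ((α * X.trace) • R) X * A + (α * X.trace) • (Cᵀ * C) :=
  rfl

@[simp]
lemma riccOp_zero : riccOp A B C R α 0 = 0 := by
  simp [riccOp]

lemma riccOp_smul {c : ℝ} (hc : c ≠ 0) (X : Matrix (Fin n) (Fin n) ℝ) :
    riccOp A B C R α (c • X) = c • riccOp A B C R α X := by
  have hD : (α * (c • X).trace) • R = c • (α * X.trace) • R := by
    rw [trace_smul, smul_smul, smul_eq_mul, mul_left_comm]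
  rw [riccOp_eq_kalmanUpdate, riccOp_eq_kalmanUpdate, hD, kalmanUpdate_smul hc, trace_smul,
    smul_eq_mul, mul_left_comm, Matrix.mul_smul, Matrix.smul_mul, smul_add, smul_smul]

variable {A B C R α}

lemma riccOp_posSemidef (hα : 0 < α) (hR : R.PosDef) {X : Matrix (Fin n) (Fin n) ℝ}
    (hX : X.PosSemidef) : (riccOp A B C R α X).PosSemidef := by
  rcases hX.trace_nonneg.eq_or_lt with htr | htr
  · rw [hX.trace_eq_zero_iff.mp htr.symm, riccOp_zero]
    exact .zero
  · have hscale : 0 < α * X.trace := mul_pos hα htr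
    rw [riccOp_eq_kalmanUpdate]
    exact ((kalmanUpdate_posSemidef (hR.smul hscale) hX).transpose_mul_mul_same A).add
      ((posSemidef_transpose_mul_self C).smul hscale.le)

lemma riccOp_sub_posSemidef (hα : 0 < α) (hR : R.PosDef) {X Y : Matrix (Fin n) (Fin n) ℝ}
    (hY : Y.PosSemidef) (hXY : (X - Y).PosSemidef) :
    (riccOp A B C R α X - riccOp A B C R α Y).PosSemidef := by
  rcases hY.trace_nonneg.eq_or_lt with htrY | htrY
  · rw [hY.trace_eq_zero_iff.mp htrY.symm] at hXY ⊢
    simpa using riccOp_posSemidef hα hR (by simpa using hXY)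
  · have hgap : 0 ≤ α * (X.trace - Y.trace) :=
      mul_nonneg hα.le (by simpa [trace_sub] using hXY.trace_nonneg)
    have hdiff : riccOp A B C R α X - riccOp A B C R α Y
        = Aᵀ * (kalmanUpdate B ((α * X.trace) • R) X
            - kalmanUpdate B ((α * Y.trace) • R) Y) * A
          + (α * (X.trace - Y.trace)) • (Cᵀ * C) := by
      simp only [riccOp_eq_kalmanUpdate, Matrix.sub_mul, mul_sub, sub_smul]
      abel
    have hDD : ((α * X.trace) • R - (α * Y.trace) • R).PosSemidef := by
      rw [← sub_smul, ← mul_sub]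
      exact hR.posSemidef.smul hgap
    rw [hdiff]
    exact ((kalmanUpdate_sub_posSemidef (hR.smul (mul_pos hα htrY)) hDD hY hXY)
      |>.transpose_mul_mul_same A).add ((posSemidef_transpose_mul_self C).smul hgap)

end riccOp

/-- `F` is positively homogeneous of degree one and order-preserving on the
PSD cone. -/
theorem riccOp_homogeneous_and_orderPreserving
    {n m p : ℕ} (A : Matrix (Fin n) (Fin n) ℝ) (B : Matrix (Fin n) (Fin m) ℝ)
    (C : Matrix (Fin p) (Fin n) ℝ) (R : Matrix (Fin m) (Fin m) ℝ)
    (α : ℝ) (hα : 0 < α) (hR : R.PosDef) :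
    (∀ (c : ℝ), 0 < c → ∀ X : Matrix (Fin n) (Fin n) ℝ, X.PosSemidef →
        riccOp A B C R α (c • X) = c • riccOp A B C R α X) ∧
      (∀ X Y : Matrix (Fin n) (Fin n) ℝ, Y.PosSemidef → (X - Y).PosSemidef →
        (riccOp A B C R α X - riccOp A B C R α Y).PosSemidef ∧
          (riccOp A B C R α Y).PosSemidef) :=
  ⟨fun _ hc X _ => riccOp_smul A B C R α hc.ne' X,
    fun _ _ hY hXY => ⟨riccOp_sub_posSemidef hα hR hY hXY, riccOp_posSemidef hα hR hY⟩⟩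
end

section
/- Let F be a continuous, positively homogeneous, order-preserving map on a normal cone K in a finite-dimensional real vector space, and suppose some iterate F^n is strongly order-preserving (maps x ≤ y, x ≠ y to F^n(y) − F^n(x) in the interior of K). If F(x*) = ρ x* with x* ∈ K \ {0}, then x* lies in the interior of K. -/
/-- If `F` is continuous, homogeneous and order-preserving on a normal cone
`K ⊆ ℝ^d`, some iterate `F^[n]` is strongly order-preserving, and
`F x* = ρ • x*` with `x* ∈ K \ {0}`, then `x*` lies in the interior of `K`. -/
theorem eigenvector_mem_interior_of_strongly_orderPreserving_iterate
    {d : ℕ} (K : Set (EuclideanSpace ℝ (Fin d)))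
    (hClosed : IsClosed K)
    (hIntNe : (interior K).Nonempty)
    (hSmul : ∀ (a : ℝ), 0 ≤ a → ∀ x ∈ K, a • x ∈ K)
    (hAdd : ∀ x ∈ K, ∀ y ∈ K, x + y ∈ K)
    (hPointed : ∀ x ∈ K, -x ∈ K → x = 0)
    (hNormal : ∃ δ > 0, ∀ x ∈ K, ∀ y ∈ K, ‖x‖ = 1 → ‖y‖ = 1 → δ < ‖x + y‖)
    (F : EuclideanSpace ℝ (Fin d) → EuclideanSpace ℝ (Fin d))
    (hFK : ∀ x ∈ K, F x ∈ K)
    (hCont : Continuous F)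
    (hHom : ∀ (a : ℝ), 0 ≤ a → ∀ x ∈ K, F (a • x) = a • F x)
    (hMono : ∀ x ∈ K, ∀ y ∈ K, y - x ∈ K → F y - F x ∈ K)
    (n : ℕ)
    (hStrong : ∀ x ∈ K, ∀ y ∈ K, y - x ∈ K → x ≠ y →
      F^[n] y - F^[n] x ∈ interior K)
    (ρ : ℝ) (hρ : 0 ≤ ρ)
    (xs : EuclideanSpace ℝ (Fin d)) (hxs : xs ∈ K) (hxs0 : xs ≠ 0)
    (hEig : F xs = ρ • xs) :
    xs ∈ interior K := by
  -- `0 ∈ K`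
  have h0K : (0 : EuclideanSpace ℝ (Fin d)) ∈ K := by
    have := hSmul 0 le_rfl xs hxs
    simpa using this
  have hF0 : F 0 = 0 := by
    have := hHom 0 le_rfl xs hxs
    simpa using this
  -- `F^[n] 0 = 0`
  have hFn0 : ∀ m : ℕ, F^[m] 0 = 0 := by
    intro m
    induction m with
    | zero => simp
    | succ k ih => rw [Function.iterate_succ_apply', ih, hF0]
  -- `F^[n] xs = ρ ^ n • xs`
  have hFnxs : ∀ m : ℕ, F^[m] xs = ρ ^ m • xs := by
    intro m
    induction m with
    | zero => simp
    | succ k ih =>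
      rw [Function.iterate_succ_apply', ih,
        hHom (ρ ^ k) (pow_nonneg hρ k) xs hxs, hEig, smul_smul, pow_succ]
  have hmem : ρ ^ n • xs ∈ interior K := by
    have := hStrong 0 h0K xs hxs (by simpa using hxs) (fun h => hxs0 h.symm)
    rw [hFn0 n, hFnxs n, sub_zero] at this
    exact this
  by_cases hρn : ρ ^ n = 0
  · -- then `0 ∈ interior K`, translate by `xs`
    rw [hρn, zero_smul] at hmem
    have hopen : IsOpen ((fun z => xs + z) '' interior K) :=
      (isOpenMap_add_left xs) _ isOpen_interior
    have hsub : (fun z => xs + z) '' interior K ⊆ K := by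
      rintro _ ⟨z, hz, rfl⟩
      exact hAdd xs hxs z (interior_subset hz)
    have : xs ∈ (fun z => xs + z) '' interior K :=
      ⟨0, hmem, by simp⟩
    exact interior_maximal hsub hopen this
  · have hc : 0 < ρ ^ n := lt_of_le_of_ne (pow_nonneg hρ n) (Ne.symm hρn)
    set c := ρ ^ n
    have hopen : IsOpen ((fun z => c⁻¹ • z) '' interior K) :=
      (isOpenMap_smul₀ (inv_ne_zero hρn)) _ isOpen_interior
    have hsub : (fun z => c⁻¹ • z) '' interior K ⊆ K := by
      rintro _ ⟨z, hz, rfl⟩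
      exact hSmul c⁻¹ (inv_nonneg.mpr hc.le) z (interior_subset hz)
    have hxmem : xs ∈ (fun z => c⁻¹ • z) '' interior K := by
      refine ⟨c • xs, hmem, ?_⟩
      simp only []
      rw [smul_smul, inv_mul_cancel₀ hρn, one_smul]
    exact interior_maximal hsub hopen hxmem
end
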